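/- Let n ≥ 2 be an integer, let D be a finite set of n points, and let σ : D → [0,1] satisfy (1/n) Σ_{d ∈ D} σ(d) ≥ 1 − ε for some 0 < ε ≤ 1/2. Fix C > 0, 0 < δ < 1/2, and an integer k ≥ (1+C) ln(n) / (2δ²). For each d ∈ D let X₁^d, …, X_k^d be random variables on a common probability space such that for each fixed d the family (X_i^d)_{i=1}^k is independent, each X_i^d takes values in {0,1}, and E[X_i^d] = σ(d). Then with probability at least 1 − n^{−C}, the number of points d ∈ D with (1/k) Σ_{i=1}^k X_i^d ≤ 1/2 is at most n · ε/(1/2 − δ). -/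

import Mathlib

open MeasureTheory ProbabilityTheory Real Finset

/-!
A point `d` with goodness `σ d ≥ 1/2 + δ` is misclassified by the majority vote only if the sum
of its `k` independent votes falls `kδ` below its mean, which by Hoeffding's inequality has
probability at most `exp (-2δ²k) ≤ n^(-C-1)`; a union bound over the at most `n` such points
leaves probability at least `1 - n^(-C)` that none of them is misclassified. On that event every
misclassified point has `1 - σ d > 1/2 - δ`, and since `∑ (1 - σ d) ≤ nε`, Markov's inequality
bounds their number by `nε / (1/2 - δ)`.
-/

section Hoeffding

variable {Ω ι : Type*} [MeasurableSpace Ω] {μ : Measure Ω} [IsProbabilityMeasure μ]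

theorem measureReal_sum_le_sum_integral_sub_le {Y : ι → Ω → ℝ} (hindep : iIndepFun Y μ)
    (hmeas : ∀ i, AEMeasurable (Y i) μ) {a b : ℝ} (hY : ∀ i, ∀ᵐ ω ∂μ, Y i ω ∈ Set.Icc a b)
    (s : Finset ι) {t : ℝ} (ht : 0 ≤ t) :
    μ.real {ω | ∑ i ∈ s, Y i ω ≤ ∑ i ∈ s, μ[Y i] - t} ≤
      exp (-2 * t ^ 2 / (#s * (b - a) ^ 2)) := by
  -- Hoeffding's upper-tail bound for the centred, negated variables `μ[Y i] - Y i`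
  have hindep_neg := hindep.comp (fun i (x : ℝ) ↦ -(x - μ[Y i])) fun i ↦ by fun_prop
  have h := HasSubgaussianMGF.measure_sum_ge_le_of_iIndepFun hindep_neg (s := s)
    (fun i _ ↦ (hasSubgaussianMGF_of_mem_Icc (hmeas i) (hY i)).neg) ht
  convert h using 2
  · ext ω
    simp only [Set.mem_ofPred_eq, Function.comp_apply, neg_sub, sum_sub_distrib]
    constructor <;> intro h <;> linarith
  · simp only [sum_const, nsmul_eq_mul]
    push_cast
    rw [Real.norm_eq_abs, div_pow, sq_abs,
      show (2 : ℝ) * (#s * ((b - a) ^ 2 / 2 ^ 2)) = #s * (b - a) ^ 2 / 2 by ring, div_div_eq_mul_div]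
    ring

theorem measureReal_average_le_half_le [Fintype ι] {Y : ι → Ω → ℝ} (hindep : iIndepFun Y μ)
    (hmeas : ∀ i, AEMeasurable (Y i) μ) (hY : ∀ i, ∀ᵐ ω ∂μ, Y i ω ∈ Set.Icc (0 : ℝ) 1)
    {p δ : ℝ} (hmean : ∀ i, μ[Y i] = p) (hδ : 0 ≤ δ) (hp : 1 / 2 + δ ≤ p) :
    μ.real {ω | 1 / (Fintype.card ι : ℝ) * ∑ i, Y i ω ≤ 1 / 2} ≤
      exp (-(2 * δ ^ 2 * Fintype.card ι)) := by
  set k : ℝ := (Fintype.card ι : ℝ)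
  have hsub : {ω | 1 / k * ∑ i, Y i ω ≤ 1 / 2} ⊆ {ω | ∑ i, Y i ω ≤ ∑ i, μ[Y i] - k * δ} := by
    intro ω hω
    simp only [Set.mem_ofPred_eq, hmean, sum_const, card_univ, nsmul_eq_mul] at hω ⊢
    rcases isEmpty_or_nonempty ι with hι | hι
    · simp [k]
    · have hk : 0 < k := by positivity
      rw [one_div, inv_mul_le_iff₀ hk] at hω
      nlinarith
  calc _ ≤ μ.real {ω | ∑ i, Y i ω ≤ ∑ i, μ[Y i] - k * δ} := measureReal_mono hsub
    _ ≤ exp (-2 * (k * δ) ^ 2 / (k * (1 - 0) ^ 2)) :=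
      measureReal_sum_le_sum_integral_sub_le hindep hmeas hY _ (by positivity)
    _ = exp (-(2 * δ ^ 2 * k)) := by
      rcases eq_or_ne k 0 with hk | hk
      · simp [hk]
      · field_simp; norm_num

end Hoeffding

theorem card_filter_lt_mul_le_sum_sub {α : Type*} (D : Finset α) {f : α → ℝ}
    (hf : ∀ d ∈ D, f d ≤ 1) (a : ℝ) :
    #{d ∈ D | f d < a} * (1 - a) ≤ ∑ d ∈ D, (1 - f d) :=
  calc #{d ∈ D | f d < a} * (1 - a) = #{d ∈ D | f d < a} • (1 - a) := (nsmul_eq_mul _ _).symm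
    _ ≤ ∑ d ∈ D with f d < a, (1 - f d) :=
      card_nsmul_le_sum _ _ _ fun d hd ↦ by linarith [(mem_filter.1 hd).2]
    _ ≤ ∑ d ∈ D, (1 - f d) :=
      sum_le_sum_of_subset_of_nonneg (filter_subset _ _) fun d hd _ ↦ by linarith [hf d hd]

theorem card_filter_lt_le_of_average_ge {α : Type*} {D : Finset α} {n : ℕ} (hD : #D = n)
    (hn : 0 < n) {f : α → ℝ} (hf : ∀ d ∈ D, f d ≤ 1) {ε a : ℝ} (ha : a < 1)
    (havg : 1 / (n : ℝ) * ∑ d ∈ D, f d ≥ 1 - ε) :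
    #{d ∈ D | f d < a} ≤ n * ε / (1 - a) := by
  rw [one_div, ge_iff_le, le_inv_mul_iff₀ (by positivity)] at havg
  rw [le_div_iff₀ (by linarith)]
  calc (#{d ∈ D | f d < a} : ℝ) * (1 - a) ≤ ∑ d ∈ D, (1 - f d) :=
        card_filter_lt_mul_le_sum_sub D hf a
    _ ≤ n * ε := by
        simp only [sum_sub_distrib, sum_const, hD, nsmul_eq_mul, mul_one]
        linarith

theorem mul_exp_neg_le_rpow_neg {x C a : ℝ} (hx : 0 < x) (h : (1 + C) * log x ≤ a) :
    x * exp (-a) ≤ x ^ (-C) :=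
  calc x * exp (-a) ≤ exp (log x) * exp (-((1 + C) * log x)) := by
        rw [exp_log hx]; gcongr
    _ = x ^ (-C) := by rw [← exp_add, rpow_def_of_pos hx]; ring_nf

theorem measureReal_biUnion_finset_le_card_mul {Ω β : Type*} [MeasurableSpace Ω]
    {μ : Measure Ω} (s : Finset β) {E : β → Set Ω} {q : ℝ} (hE : ∀ b ∈ s, μ.real (E b) ≤ q) :
    μ.real (⋃ b ∈ s, E b) ≤ #s * q :=
  calc μ.real (⋃ b ∈ s, E b) ≤ ∑ b ∈ s, μ.real (E b) := measureReal_biUnion_finset_le _ _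
    _ ≤ #s * q := by simpa using sum_le_sum hE

theorem one_sub_ofReal_le_measure {Ω : Type*} [MeasurableSpace Ω] {μ : Measure Ω}
    [IsProbabilityMeasure μ] {s t : Set Ω} (hst : sᶜ ⊆ t) {q : ℝ} (hs : μ.real s ≤ q) :
    1 - ENNReal.ofReal q ≤ μ t :=
  calc 1 - ENNReal.ofReal q ≤ 1 - μ s := by
        gcongr
        rw [← ofReal_measureReal (measure_ne_top _ _)]
        exact ENNReal.ofReal_le_ofReal hs
    _ ≤ μ t := by
        rw [tsub_le_iff_left, ← measure_univ (μ := μ)]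
        exact (measure_univ_le_add_compl s).trans (add_le_add le_rfl (measure_mono hst))

open Classical in
theorem empirical_error_majority_voting_general
    {Ω α : Type*} [MeasurableSpace Ω] (μ : Measure Ω) [IsProbabilityMeasure μ]
    (n : ℕ) (hn : 2 ≤ n) (D : Finset α) (hD : D.card = n)
    (σ : α → ℝ) (hσ : ∀ d ∈ D, σ d ∈ Set.Icc (0 : ℝ) 1)
    (ε : ℝ)
    (havg : (1 / (n : ℝ)) * ∑ d ∈ D, σ d ≥ 1 - ε)
    (C δ : ℝ) (hδ0 : 0 < δ) (hδ : δ < 1 / 2)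
    (k : ℕ) (hk : (1 + C) * Real.log n / (2 * δ ^ 2) ≤ (k : ℝ))
    (X : α → Fin k → Ω → ℝ)
    (hmeas : ∀ d ∈ D, ∀ i, Measurable (X d i))
    (hindep : ∀ d ∈ D, iIndepFun (X d) μ)
    (hrange : ∀ d ∈ D, ∀ i, ∀ ω, X d i ω = 0 ∨ X d i ω = 1)
    (hmean : ∀ d ∈ D, ∀ i, ∫ ω, X d i ω ∂μ = σ d) :
    μ {ω | ((D.filter fun d => (1 / (k : ℝ)) * ∑ i, X d i ω ≤ 1 / 2).card : ℝ) ≤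
        (n : ℝ) * ε / (1 / 2 - δ)} ≥
      1 - ENNReal.ofReal ((n : ℝ) ^ (-C)) := by
  set wrong : α → Set Ω := fun d ↦ {ω | 1 / (k : ℝ) * ∑ i, X d i ω ≤ 1 / 2}
  set good := {d ∈ D | 1 / 2 + δ ≤ σ d}
  have hgood_wrong : ∀ d ∈ good, μ.real (wrong d) ≤ exp (-(2 * δ ^ 2 * k)) := by
    intro d hd
    obtain ⟨hdD, hσd⟩ := mem_filter.1 hd
    simpa only [Fintype.card_fin] using measureReal_average_le_half_le (hindep d hdD)
      (fun i ↦ (hmeas d hdD i).aemeasurable)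
      (fun i ↦ ae_of_all _ fun ω ↦ by rcases hrange d hdD i ω with h | h <;> simp [h])
      (hmean d hdD) hδ0.le hσd
  have hunion : μ.real (⋃ d ∈ good, wrong d) ≤ (n : ℝ) ^ (-C) := by
    rw [div_le_iff₀ (by positivity)] at hk
    refine (measureReal_biUnion_finset_le_card_mul good hgood_wrong).trans ?_
    calc (#good : ℝ) * exp (-(2 * δ ^ 2 * k)) ≤ n * exp (-(2 * δ ^ 2 * k)) := by
          gcongr; exact_mod_cast hD ▸ card_filter_le D _
      _ ≤ (n : ℝ) ^ (-C) := mul_exp_neg_le_rpow_neg (by positivity) (by linarith)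
  have hbad : (#{d ∈ D | σ d < 1 / 2 + δ} : ℝ) ≤ n * ε / (1 / 2 - δ) := by
    convert card_filter_lt_le_of_average_ge (a := 1 / 2 + δ) hD (by omega)
      (fun d hd ↦ (hσ d hd).2) (by linarith) havg using 2
    ring
  refine one_sub_ofReal_le_measure (fun ω hω ↦ hbad.trans' ?_) hunion
  simp only [Set.mem_compl_iff, Set.mem_iUnion, not_exists] at hω
  refine Nat.cast_le.2 (card_le_card fun d hd ↦ ?_)
  obtain ⟨hdD, hdwrong⟩ := mem_filter.1 hd
  exact mem_filter.2 ⟨hdD, lt_of_not_ge fun hσd ↦ hω d (mem_filter.2 ⟨hdD, hσd⟩) hdwrong⟩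

open Classical in
/-- empirical error bound for majority voting: if the average goodness of
the `n` points of `D` is at least `1 - ε`, and for each `d` the indicators
`X d 1, …, X d k` are independent `{0,1}`-valued with mean `σ d`, where
`k ≥ (1+C) ln n / (2δ²)`, then with probability at least `1 - n^(-C)` at most
`n ε/(1/2 - δ)` points have average score at most `1/2`. -/
theorem empirical_error_majority_voting
    {Ω α : Type*} [MeasurableSpace Ω] (μ : Measure Ω) [IsProbabilityMeasure μ]
    (n : ℕ) (hn : 2 ≤ n) (D : Finset α) (hD : D.card = n)
    (σ : α → ℝ) (hσ : ∀ d ∈ D, σ d ∈ Set.Icc (0 : ℝ) 1)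
    (ε : ℝ) (hε0 : 0 < ε) (hε : ε ≤ 1 / 2)
    (havg : (1 / (n : ℝ)) * ∑ d ∈ D, σ d ≥ 1 - ε)
    (C δ : ℝ) (hC : 0 < C) (hδ0 : 0 < δ) (hδ : δ < 1 / 2)
    (k : ℕ) (hk : (1 + C) * Real.log n / (2 * δ ^ 2) ≤ (k : ℝ))
    (X : α → Fin k → Ω → ℝ)
    (hmeas : ∀ d ∈ D, ∀ i, Measurable (X d i))
    (hindep : ∀ d ∈ D, iIndepFun (X d) μ)
    (hrange : ∀ d ∈ D, ∀ i, ∀ ω, X d i ω = 0 ∨ X d i ω = 1)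
    (hmean : ∀ d ∈ D, ∀ i, ∫ ω, X d i ω ∂μ = σ d) :
    μ {ω | ((D.filter fun d => (1 / (k : ℝ)) * ∑ i, X d i ω ≤ 1 / 2).card : ℝ) ≤
        (n : ℝ) * ε / (1 / 2 - δ)} ≥
      1 - ENNReal.ofReal ((n : ℝ) ^ (-C)) :=
  empirical_error_majority_voting_general μ n hn D hD σ hσ ε havg C δ hδ0 hδ k hk X hmeas hindep
    hrange hmean
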